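/- Let C ⊆ ℝⁿ be a pointed n-dimensional closed convex cone, p < 0, and μ a nonzero finite Borel measure on Ω = S^{n-1} ∩ int C°. Let (ω_i)_{i∈ℕ} be nonempty compact subsets of Ω with ω_i contained in the interior of ω_{i+1} relative to S^{n-1}, ⋃_i ω_i = Ω, and μ restricted to ω_0 nonzero. For each i, let K_i ∈ 𝒦(C,ω_i) be such that γⁿ(K_i) / ∫_{ω_i} (−h_{K_i})^p dμ ≥ γⁿ([f]) / ∫_{ω_i} f^p dμ for every continuous f : ω_i → (0,∞) (i.e. K_i maximizes φ_{μ⌞ω_i}). Then there exist constants 0 < m < M such that m < dist(0, K_i) < M for all i ∈ ℕ. -/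

import Mathlib

/-! Write `d_i = dist(0, K_i)`. Testing the maximality of `K_i` against the constant function `1`
gives `γⁿ([1]) · d_i^p ≤ γⁿ(K_i)`, because `0 < -h_{K_i} ≤ d_i` on `ω_i` and `p < 0`. All Wulff
shapes `[1]` contain one fixed ball, so `γⁿ([1])` is bounded below uniformly in `i`, while
`γⁿ(K_i) ≤ Γ e^{-d_i²/4}` because `K_i` misses the open ball of radius `d_i`. Hence
`d_i^p ≤ c e^{-d_i²/4}` for a constant `c`, which fails for `d_i` near `0` and for `d_i` large. -/

open MeasureTheory Metric Set Filter
open scoped RealInnerProductSpace Pointwise Topology ENNReal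

noncomputable section

/-- `ℝⁿ` as Euclidean space. -/
abbrev En (n : ℕ) := EuclideanSpace ℝ (Fin n)

/-- The standard Gaussian measure of a set `A ⊆ ℝⁿ`:
`γⁿ(A) = (2π)^{-n/2} ∫_A e^{-‖x‖²/2} dx`. -/
def gaussianMeasure (n : ℕ) (A : Set (En n)) : ℝ :=
  (2 * Real.pi) ^ (-(n : ℝ) / 2) * ∫ x in A, Real.exp (-‖x‖ ^ 2 / 2)

/-- A pointed (no lines), `n`-dimensional (nonempty interior), closed convex cone. -/
def IsPointedCone {n : ℕ} (C : Set (En n)) : Prop :=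
  IsClosed C ∧ Convex ℝ C ∧ (∀ x ∈ C, ∀ c : ℝ, 0 ≤ c → c • x ∈ C) ∧
    (interior C).Nonempty ∧ ∀ x ∈ C, -x ∈ C → x = 0

/-- The polar cone `C° = {x : ⟨x,y⟩ ≤ 0 ∀ y ∈ C}`. -/
def polarCone {n : ℕ} (C : Set (En n)) : Set (En n) := {x | ∀ y ∈ C, ⟪x, y⟫ ≤ 0}

/-- `Ω = S^{n-1} ∩ int C°`. -/
def OmegaSet {n : ℕ} (C : Set (En n)) : Set (En n) :=
  sphere (0 : En n) 1 ∩ interior (polarCone C)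

/-- A pseudo-cone: nonempty closed convex set not containing the origin with `λK ⊆ K` for `λ ≥ 1`. -/
def IsPseudoCone {n : ℕ} (K : Set (En n)) : Prop :=
  K.Nonempty ∧ IsClosed K ∧ Convex ℝ K ∧ (0 : En n) ∉ K ∧
    ∀ c : ℝ, 1 ≤ c → c • K ⊆ K

/-- The recession cone `rec K = {z : K + z ⊆ K}`. -/
def recessionCone {n : ℕ} (K : Set (En n)) : Set (En n) := {z | ∀ x ∈ K, x + z ∈ K}

/-- A `C`-pseudo-cone: a pseudo-cone whose recession cone is `C`. -/
def IsCPseudoCone {n : ℕ} (C K : Set (En n)) : Prop :=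
  IsPseudoCone K ∧ recessionCone K = C

/-- The support function `h_K(u) = sup {⟨x,u⟫ : x ∈ K}`. -/
def suppFn {n : ℕ} (K : Set (En n)) (u : En n) : ℝ := sSup ((fun x => ⟪x, u⟫) '' K)

/-- The Wulff shape `[f] = C ∩ ⋂_{u ∈ ω} {y : ⟨y,u⟩ ≤ -f(u)}`. -/
def wulffShape {n : ℕ} (C ω : Set (En n)) (f : En n → ℝ) : Set (En n) :=
  C ∩ ⋂ u ∈ ω, {y | ⟪y, u⟫ ≤ -f u}

/-- `K ∈ 𝒦(C,ω)`: `K` is a `C`-pseudo-cone that is `C`-determined by `ω`. -/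
def InKClass {n : ℕ} (C ω K : Set (En n)) : Prop :=
  IsCPseudoCone C K ∧ K = C ∩ ⋂ u ∈ ω, {y | ⟪y, u⟫ ≤ suppFn K u}

end

lemma integrable_exp_neg_mul_norm_sq {V : Type*} [NormedAddCommGroup V] [InnerProductSpace ℝ V]
    [FiniteDimensional ℝ V] [MeasurableSpace V] [BorelSpace V] {b : ℝ} (hb : 0 < b) :
    Integrable (fun v : V => Real.exp (-b * ‖v‖ ^ 2)) := by
  refine (GaussianFourier.integrable_cexp_neg_mul_sq_norm_add
    (b := (b : ℂ)) (by simpa using hb) 0 (0 : V)).norm.congr (.of_forall fun v => ?_)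
  simp [Complex.norm_exp, ← Complex.ofReal_pow]

lemma integrable_exp_neg_norm_sq_div {n : ℕ} {c : ℝ} (hc : 0 < c) :
    Integrable (fun x : En n => Real.exp (-‖x‖ ^ 2 / c)) := by
  simpa only [neg_mul, one_div, ← div_eq_inv_mul, neg_div] using
    integrable_exp_neg_mul_norm_sq (V := En n) (one_div_pos.2 hc)

lemma gaussianMeasure_mono {n : ℕ} {A B : Set (En n)} (h : A ⊆ B) :
    gaussianMeasure n A ≤ gaussianMeasure n B := by
  unfold gaussianMeasure
  refine mul_le_mul_of_nonneg_left ?_ (by positivity)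
  exact setIntegral_mono_set (integrable_exp_neg_norm_sq_div two_pos).integrableOn
    (.of_forall fun _ => (Real.exp_pos _).le) h.eventuallyLE

lemma gaussianMeasure_pos {n : ℕ} {A : Set (En n)} (hA : (interior A).Nonempty) :
    0 < gaussianMeasure n A := by
  obtain ⟨x, hx⟩ := hA
  obtain ⟨r, hr, hball⟩ := Metric.isOpen_iff.1 isOpen_interior x hx
  refine lt_of_lt_of_le ?_ (gaussianMeasure_mono (hball.trans interior_subset))
  unfold gaussianMeasure
  refine mul_pos (by positivity) ?_
  rw [setIntegral_pos_iff_support_of_nonneg_ae (.of_forall fun _ => (Real.exp_pos _).le)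
    (integrable_exp_neg_norm_sq_div two_pos).integrableOn]
  simpa [Function.support, (Real.exp_pos _).ne'] using measure_ball_pos volume x hr

lemma exists_gaussianMeasure_le_mul_exp (n : ℕ) : ∃ Γ : ℝ, ∀ A : Set (En n), MeasurableSet A →
    ∀ d : ℝ, 0 ≤ d → (∀ x ∈ A, d ≤ ‖x‖) → gaussianMeasure n A ≤ Γ * Real.exp (-d ^ 2 / 4) := by
  refine ⟨(2 * Real.pi) ^ (-(n : ℝ) / 2) * ∫ x : En n, Real.exp (-‖x‖ ^ 2 / 4),
    fun A hA d hd hAd => ?_⟩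
  have hint := integrable_exp_neg_norm_sq_div (n := n) (c := 4) (by norm_num)
  have hpoint : ∀ x ∈ A,
      Real.exp (-‖x‖ ^ 2 / 2) ≤ Real.exp (-d ^ 2 / 4) * Real.exp (-‖x‖ ^ 2 / 4) := by
    intro x hx
    rw [← Real.exp_add, Real.exp_le_exp]
    nlinarith [hAd x hx]
  calc gaussianMeasure n A
      ≤ (2 * Real.pi) ^ (-(n : ℝ) / 2) *
          ∫ x in A, Real.exp (-d ^ 2 / 4) * Real.exp (-‖x‖ ^ 2 / 4) := by
        unfold gaussianMeasure
        refine mul_le_mul_of_nonneg_left ?_ (by positivity)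
        exact setIntegral_mono_on (integrable_exp_neg_norm_sq_div two_pos).integrableOn
          (hint.const_mul _).integrableOn hA hpoint
    _ ≤ (2 * Real.pi) ^ (-(n : ℝ) / 2) *
          (Real.exp (-d ^ 2 / 4) * ∫ x : En n, Real.exp (-‖x‖ ^ 2 / 4)) := by
        rw [integral_const_mul]
        refine mul_le_mul_of_nonneg_left (mul_le_mul_of_nonneg_left ?_ (Real.exp_pos _).le)
          (by positivity)
        exact setIntegral_le_integral hint (.of_forall fun _ => (Real.exp_pos _).le)
    _ = _ := by ring

lemma exists_closedBall_subset_of_smul_mem {n : ℕ} {C : Set (En n)}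
    (hsmul : ∀ x ∈ C, ∀ c : ℝ, 0 ≤ c → c • x ∈ C) (hint : (interior C).Nonempty)
    {r : ℝ} (hr : 0 < r) : ∃ z, closedBall z r ⊆ C := by
  obtain ⟨x, hx⟩ := hint
  obtain ⟨ε, hε, hball⟩ := nhds_basis_closedBall.mem_iff.1 (mem_interior_iff_mem_nhds.1 hx)
  refine ⟨(r / ε) • x, ?_⟩
  have hscale : closedBall ((r / ε) • x) r = (r / ε) • closedBall x ε := by
    rw [smul_closedBall _ _ hε.le, Real.norm_of_nonneg (by positivity), div_mul_cancel₀ _ hε.ne']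
  rw [hscale]
  rintro _ ⟨y, hy, rfl⟩
  exact hsmul y (hball hy) _ (by positivity)

lemma inner_le_neg_of_closedBall_subset {n : ℕ} {C : Set (En n)} {z u : En n} {r : ℝ}
    (hr : 0 ≤ r) (hball : closedBall z r ⊆ C) (hu : u ∈ polarCone C) (hu1 : ‖u‖ = 1) :
    ⟪z, u⟫ ≤ -r := by
  have hmem : z + r • u ∈ closedBall z r := by
    simp [norm_smul, hu1, abs_of_nonneg hr]
  have := hu _ (hball hmem)
  rw [inner_add_right, real_inner_smul_right, real_inner_self_eq_norm_sq, hu1,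
    real_inner_comm] at this
  linarith

lemma closedBall_subset_wulffShape_one {n : ℕ} {C ω : Set (En n)} {z : En n}
    (hball : closedBall z 2 ⊆ C) (hω : ω ⊆ sphere 0 1 ∩ polarCone C) :
    closedBall z 1 ⊆ wulffShape C ω (fun _ => 1) := by
  intro y hy
  have hyC : closedBall y 1 ⊆ C := (closedBall_subset_closedBall' (by
    rw [mem_closedBall] at hy; linarith)).trans hball
  refine ⟨hyC (mem_closedBall_self zero_le_one), mem_iInter₂.2 fun u hu => ?_⟩
  exact inner_le_neg_of_closedBall_subset zero_le_one hyC (hω hu).2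
    (mem_sphere_zero_iff_norm.1 (hω hu).1)

lemma exists_inner_le_neg_mul_norm {n : ℕ} {C : Set (En n)} {u : En n}
    (hu : u ∈ interior (polarCone C)) : ∃ ε > 0, ∀ x ∈ C, ⟪x, u⟫ ≤ -ε * ‖x‖ := by
  obtain ⟨ε, hε, hball⟩ := nhds_basis_closedBall.mem_iff.1 (mem_interior_iff_mem_nhds.1 hu)
  refine ⟨ε, hε, fun x hx => ?_⟩
  rcases eq_or_ne x 0 with rfl | hx0
  · simp
  have hxpos : 0 < ‖x‖ := norm_pos_iff.2 hx0
  have hmem : u + (ε / ‖x‖) • x ∈ closedBall u ε := by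
    simp [norm_smul, abs_of_pos hε, hxpos.ne']
  have := hball hmem x hx
  rw [inner_add_left, real_inner_smul_left, real_inner_self_eq_norm_sq, real_inner_comm] at this
  have hsq : ε / ‖x‖ * ‖x‖ ^ 2 = ε * ‖x‖ := by field_simp
  linarith

lemma neg_suppFn_mem_Ioc {n : ℕ} {C K : Set (En n)} {u : En n} (hKC : K ⊆ C)
    (hKne : K.Nonempty) (hd : 0 < infDist 0 K) (hu : u ∈ OmegaSet C) :
    -suppFn K u ∈ Ioc 0 (infDist 0 K) := by
  have hu1 : ‖u‖ = 1 := mem_sphere_zero_iff_norm.1 hu.1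
  obtain ⟨ε, hε, hεu⟩ := exists_inner_le_neg_mul_norm hu.2
  have hnorm : ∀ x ∈ K, infDist 0 K ≤ ‖x‖ := fun x hx => by
    simpa using infDist_le_dist_of_mem (x := (0 : En n)) hx
  have hbdd : BddAbove ((fun x => ⟪x, u⟫) '' K) := ⟨0, by
    rintro _ ⟨x, hx, rfl⟩
    nlinarith [hεu x (hKC hx), norm_nonneg x]⟩
  constructor
  · have hle : suppFn K u ≤ -ε * infDist 0 K := csSup_le (hKne.image _) (by
      rintro _ ⟨x, hx, rfl⟩
      nlinarith [hεu x (hKC hx), hnorm x hx])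
    nlinarith
  · refine (le_infDist hKne).2 fun x hx => ?_
    have hinner : -‖x‖ ≤ ⟪x, u⟫ := by
      simpa [hu1] using neg_le_of_abs_le (abs_real_inner_le_norm x u)
    have := le_csSup hbdd ⟨x, hx, rfl⟩
    rw [dist_zero_left]
    unfold suppFn
    linarith

lemma IsPseudoCone.infDist_pos {n : ℕ} {K : Set (En n)} (hK : IsPseudoCone K) :
    0 < infDist 0 K :=
  (hK.2.1.notMem_iff_infDist_pos hK.1).1 hK.2.2.2.1

lemma mul_rpow_infDist_le_gaussianMeasure {n : ℕ} {C ω K : Set (En n)} {μ : Measure (En n)}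
    [IsFiniteMeasure μ] {p : ℝ} (hp : p < 0) (hω : MeasurableSet ω) (hωΩ : ω ⊆ OmegaSet C)
    (hμω : μ ω ≠ 0) (hK : InKClass C ω K)
    (hpos : 0 < gaussianMeasure n (wulffShape C ω fun _ => 1))
    (hmax : ∀ f : En n → ℝ, ContinuousOn f ω → (∀ u ∈ ω, 0 < f u) →
      gaussianMeasure n (wulffShape C ω f) / ∫ u in ω, f u ^ p ∂μ ≤
        gaussianMeasure n K / ∫ u in ω, (-suppFn K u) ^ p ∂μ) :
    gaussianMeasure n (wulffShape C ω fun _ => 1) * infDist 0 K ^ p ≤ gaussianMeasure n K := by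
  have hd : 0 < infDist 0 K := hK.1.1.infDist_pos
  obtain ⟨⟨⟨hKne, -⟩, -⟩, hKeq⟩ := hK
  set A := gaussianMeasure n (wulffShape C ω fun _ => 1)
  set D := ∫ u in ω, (-suppFn K u) ^ p ∂μ
  set d := infDist 0 K
  have hsupp : ∀ u ∈ ω, -suppFn K u ∈ Ioc 0 d := fun u hu =>
    neg_suppFn_mem_Ioc (hKeq ▸ inter_subset_left) hKne hd (hωΩ hu)
  have hB : 0 < μ.real ω := ENNReal.toReal_pos hμω (measure_ne_top μ ω)
  have hAB : A / μ.real ω ≤ gaussianMeasure n K / D := by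
    simpa [measureReal_restrict_apply_univ] using
      hmax (fun _ => 1) continuousOn_const fun _ _ => one_pos
  -- a non-integrable integrand would give `D = 0`, making the right side `0`
  have hD : 0 < D := by
    have hD0 : 0 ≤ D := setIntegral_nonneg hω fun u hu => Real.rpow_nonneg (hsupp u hu).1.le p
    refine hD0.lt_of_ne fun hD => ?_
    rw [← hD, div_zero] at hAB
    exact (div_pos hpos hB).not_ge hAB
  have hDd : d ^ p * μ.real ω ≤ D := by
    have hint : IntegrableOn (fun u => (-suppFn K u) ^ p) ω μ := by
      by_contra h
      exact hD.ne' (integral_undef h)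
    simpa [mul_comm] using setIntegral_mono_on (integrableOn_const (measure_ne_top μ ω)) hint hω
      fun u hu => Real.rpow_le_rpow_of_nonpos (hsupp u hu).1 (hsupp u hu).2 hp.le
  have := (div_le_div_iff₀ hB hD).1 hAB
  nlinarith

lemma tendsto_rpow_mul_exp_sq_div_four_atTop {p : ℝ} :
    Tendsto (fun d : ℝ => d ^ p * Real.exp (d ^ 2 / 4)) atTop atTop := by
  refine tendsto_atTop_mono' atTop ?_ (tendsto_exp_div_rpow_atTop (-p))
  filter_upwards [eventually_ge_atTop 4] with d hd
  rw [div_eq_mul_inv, ← Real.rpow_neg (by linarith), neg_neg, mul_comm]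
  gcongr
  nlinarith

lemma exists_bounds_of_rpow_le_mul_exp {p : ℝ} (hp : p < 0) (c : ℝ) :
    ∃ m M : ℝ, 0 < m ∧ m < M ∧
      ∀ d, 0 < d → d ^ p ≤ c * Real.exp (-d ^ 2 / 4) → m < d ∧ d < M := by
  set c' := max c 1
  have hc' : 0 < c' := lt_max_of_lt_right one_pos
  obtain ⟨M₀, hM₀⟩ := eventually_atTop.1
    ((tendsto_rpow_mul_exp_sq_div_four_atTop (p := p)).eventually_gt_atTop c)
  set m := c' ^ p⁻¹ / 2
  have hm : 0 < m := by positivity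
  refine ⟨m, max M₀ (m + 1), hm, by grind, fun d hd hdc => ⟨?_, ?_⟩⟩
  · have hexp : Real.exp (-d ^ 2 / 4) ≤ 1 := Real.exp_le_one_iff.2 (by nlinarith)
    have hdc' : d ^ p ≤ c' := calc
      d ^ p ≤ c * Real.exp (-d ^ 2 / 4) := hdc
      _ ≤ c' * Real.exp (-d ^ 2 / 4) := by gcongr; exact le_max_left c 1
      _ ≤ c' := mul_le_of_le_one_right hc'.le hexp
    have := Real.rpow_le_rpow_of_nonpos (by positivity) hdc' (inv_nonpos.2 hp.le)
    rw [← Real.rpow_mul hd.le, mul_inv_cancel₀ hp.ne, Real.rpow_one] at this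
    have : 0 < c' ^ p⁻¹ := by positivity
    change c' ^ p⁻¹ / 2 < d
    linarith
  · by_contra! hdM
    have hexp : Real.exp (-d ^ 2 / 4) * Real.exp (d ^ 2 / 4) = 1 := by
      rw [← Real.exp_add]; simp [neg_div]
    have := mul_le_mul_of_nonneg_right hdc (Real.exp_pos (d ^ 2 / 4)).le
    rw [mul_assoc, hexp, mul_one] at this
    exact (hM₀ d (le_of_max_le_left hdM)).not_ge this

theorem uniform_estimate_p_neg_general {n : ℕ} (C : Set (En n)) (hC : IsPointedCone C)
    (p : ℝ) (hp : p < 0)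
    (μ : Measure (En n)) [IsFiniteMeasure μ]
    (ω : ℕ → Set (En n)) (hcpt : ∀ i, IsCompact (ω i))
    (hsub : ∀ i, ω i ⊆ OmegaSet C)
    (hint : ∀ i, ∀ x ∈ ω i, ∃ V : Set (En n),
      IsOpen V ∧ x ∈ V ∧ V ∩ sphere (0 : En n) 1 ⊆ ω (i + 1))
    (hμω0 : μ (ω 0) ≠ 0)
    (K : ℕ → Set (En n)) (hK : ∀ i, InKClass C (ω i) (K i))
    (hmax : ∀ i, ∀ f : En n → ℝ, ContinuousOn f (ω i) → (∀ u ∈ ω i, 0 < f u) →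
      gaussianMeasure n (wulffShape C (ω i) f) / ∫ u in ω i, f u ^ p ∂μ ≤
        gaussianMeasure n (K i) / ∫ u in ω i, (-suppFn (K i) u) ^ p ∂μ) :
    ∃ m M : ℝ, 0 < m ∧ m < M ∧
      ∀ i, m < Metric.infDist 0 (K i) ∧ Metric.infDist 0 (K i) < M := by
  obtain ⟨-, -, hsmul, hCint, -⟩ := hC
  obtain ⟨z, hz⟩ := exists_closedBall_subset_of_smul_mem hsmul hCint two_pos
  set a := gaussianMeasure n (ball z 1)
  have ha : 0 < a := gaussianMeasure_pos (by simp [isOpen_ball.interior_eq])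
  have haW : ∀ i, a ≤ gaussianMeasure n (wulffShape C (ω i) fun _ => 1) := fun i =>
    gaussianMeasure_mono <| ball_subset_closedBall.trans <| closedBall_subset_wulffShape_one hz <|
      (hsub i).trans (inter_subset_inter_right _ interior_subset)
  have hmono : Monotone ω := monotone_nat_of_le_succ fun i x hx => by
    obtain ⟨V, -, hxV, hV⟩ := hint i x hx
    exact hV ⟨hxV, (hsub i hx).1⟩
  obtain ⟨Γ, hΓ⟩ := exists_gaussianMeasure_le_mul_exp n
  obtain ⟨m, M, hm, hmM, hbound⟩ := exists_bounds_of_rpow_le_mul_exp hp (Γ / a)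
  refine ⟨m, M, hm, hmM, fun i => ?_⟩
  have hd := (hK i).1.1.infDist_pos
  have hlow := mul_rpow_infDist_le_gaussianMeasure hp (hcpt i).isClosed.measurableSet (hsub i)
    (fun h => hμω0 (measure_mono_null (hmono i.zero_le) h)) (hK i) (ha.trans_le (haW i))
    (hmax i)
  have hup := hΓ (K i) (hK i).1.1.2.1.measurableSet _ hd.le fun x hx => by
    simpa using infDist_le_dist_of_mem (x := 0) hx
  refine hbound _ hd ?_
  rw [div_mul_eq_mul_div, le_div_iff₀ ha]
  nlinarith [haW i, Real.rpow_pos_of_pos hd p]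

/-- Uniform bounds on `dist(0, K_i)` for maximizers `K_i` of `φ_{μ⌞ω_i}` (case `p < 0`),
where `(ω_i)` is an increasing exhaustion of `Ω` by nonempty compact sets, each contained in
the interior of the next relative to the sphere. -/
theorem uniform_estimate_p_neg {n : ℕ} (hn : 1 ≤ n) (C : Set (En n)) (hC : IsPointedCone C)
    (p : ℝ) (hp : p < 0)
    (μ : Measure (En n)) [IsFiniteMeasure μ] (hμsupp : μ (OmegaSet C)ᶜ = 0) (hμ : μ ≠ 0)
    (ω : ℕ → Set (En n)) (hne : ∀ i, (ω i).Nonempty) (hcpt : ∀ i, IsCompact (ω i))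
    (hsub : ∀ i, ω i ⊆ OmegaSet C)
    (hint : ∀ i, ∀ x ∈ ω i, ∃ V : Set (En n),
      IsOpen V ∧ x ∈ V ∧ V ∩ sphere (0 : En n) 1 ⊆ ω (i + 1))
    (hunion : ⋃ i, ω i = OmegaSet C)
    (hμω0 : μ (ω 0) ≠ 0)
    (K : ℕ → Set (En n)) (hK : ∀ i, InKClass C (ω i) (K i))
    (hmax : ∀ i, ∀ f : En n → ℝ, ContinuousOn f (ω i) → (∀ u ∈ ω i, 0 < f u) →
      gaussianMeasure n (wulffShape C (ω i) f) / ∫ u in ω i, f u ^ p ∂μ ≤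
        gaussianMeasure n (K i) / ∫ u in ω i, (-suppFn (K i) u) ^ p ∂μ) :
    ∃ m M : ℝ, 0 < m ∧ m < M ∧
      ∀ i, m < Metric.infDist 0 (K i) ∧ Metric.infDist 0 (K i) < M :=
  uniform_estimate_p_neg_general C hC p hp μ ω hcpt hsub hint hμω0 K hK hmax
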